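/- Evaluating ω on the unit circle, for θ ∈ (0, π) the value ω(e^{iθ}) has strictly positive real part; i.e., Re(ω(e^{iθ})) > 0. -/

import Mathlib

open Complex

/-- On the unit circle, for θ ∈ (0, π), the Al-Alaoui operator has strictly
positive real part. -/
theorem alaoui_positive_real_part (T : ℝ) (hT : 0 < T)
    (ω : ℂ → ℂ)
    (hω : ∀ z : ℂ, ω z = (8 / (7 * (T : ℂ))) * (z - 1) / (z + 1/7)) :
    ∀ θ : ℝ, θ ∈ Set.Ioo 0 Real.pi →
      0 < (ω (Complex.exp (θ * Complex.I))).re := by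
  intro θ ⟨h0, hπ⟩
  rw [hω]
  have hz : Complex.exp (θ * Complex.I) = (Real.cos θ : ℂ) + (Real.sin θ : ℂ) * Complex.I := by
    rw [Complex.exp_mul_I]; simp [Complex.ofReal_cos, Complex.ofReal_sin]
  rw [hz]
  have hpyth := Real.sin_sq_add_cos_sq θ
  have hs : 0 < Real.sin θ := Real.sin_pos_of_pos_of_lt_pi h0 hπ
  have hs : 0 < Real.sin θ := Real.sin_pos_of_pos_of_lt_pi h0 hπ
  simp only [Complex.div_re, Complex.mul_re, Complex.mul_im, Complex.add_re, Complex.add_im,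
    Complex.sub_re, Complex.sub_im, Complex.ofReal_re, Complex.ofReal_im, Complex.I_re,
    Complex.I_im, Complex.one_re, Complex.one_im, Complex.normSq_apply, Complex.div_im,
    Complex.ofReal_ofNat]
  norm_num
  have hc1 : Real.cos θ < 1 := by nlinarith [mul_pos hs hs, Real.neg_one_le_cos θ]
  have hD : 0 < (Real.cos θ + 1/7) * (Real.cos θ + 1/7) + Real.sin θ * Real.sin θ := by nlinarith [mul_pos hs hs, sq_nonneg (Real.cos θ + 1/7)]
  have hA : (0:ℝ) < 8 * (7 * T) / (7 * T * (7 * T)) := by apply div_pos <;> nlinarith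
  rw [← add_div]
  apply div_pos _ hD
  have h67 : (0:ℝ) < 6/7 * (1 - Real.cos θ) := by nlinarith
  nlinarith [mul_pos hA h67, mul_pos hs hs]
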